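/- Let V = E₀ ⊕ ⋯ ⊕ E_s be a direct-sum decomposition of V into nonzero subspaces with s ≥ 1 and dim E₀ = 1, let κ = κ(E₀,…,E_s), and let 1 ≤ i ≤ s. Let x̄, ȳ ∈ P(V) ∖ P(V⁰) and r > 0 satisfy gᵏ(x̄) = gᵏ(ȳ) for all 0 ≤ k ≤ i−1 and |gⁱ(x̄) − gⁱ(ȳ)| ≤ r. Then d(P_{(Vⁱ)^⊥} x̄, P_{(Vⁱ)^⊥} ȳ) ≤ s³ · 2^{3+s} · ‖g(x̄)‖_∞ · κ^{-2s-2} · r (for i = s interpret P_{(Vⁱ)^⊥} as the identity). -/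

import Mathlib

open scoped RealInnerProductSpace
open Filter

variable {V : Type*} [NormedAddCommGroup V] [InnerProductSpace ℝ V]

/-- The projective distance between the lines spanned by two nonzero vectors:
`d(x̄, ȳ) = (1 − ⟨x,y⟫²/(|x|²|y|²))^{1/2}`. -/
noncomputable def projDist (x y : V) : ℝ :=
  Real.sqrt (1 - ⟪x, y⟫ ^ 2 / (‖x‖ ^ 2 * ‖y‖ ^ 2))

/-- The distance `d(x̄, P(W))` from the line spanned by `x` to the projective space of the
submodule `W`. -/
noncomputable def projDistToSub (x : V) (W : Submodule ℝ V) : ℝ :=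
  sInf {r : ℝ | ∃ y : V, y ∈ W ∧ y ≠ 0 ∧ r = projDist x y}

/-- `κ(E₀,…,E_s)`: the minimal projective distance between nonzero vectors lying in sums of
disjoint subfamilies of the `E i`. -/
noncomputable def kappa {ι : Type*} (E : ι → Submodule ℝ V) : ℝ :=
  sInf {r : ℝ | ∃ (I J : Finset ι) (x y : V), I.Nonempty ∧ J.Nonempty ∧ Disjoint I J ∧
    x ∈ (⨆ i ∈ I, E i) ∧ x ≠ 0 ∧ y ∈ (⨆ j ∈ J, E j) ∧ y ≠ 0 ∧ r = projDist x y}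

/-- `Vⁱ = E_{i+1} ⊕ ⋯ ⊕ E_s`. -/
noncomputable def Vlow {s : ℕ} (E : Fin (s+1) → Submodule ℝ V) (i : ℕ) : Submodule ℝ V :=
  ⨆ j : Fin (s+1), ⨆ _ : i < (j : ℕ), E j

/-- `Wⁱ = E₀ ⊕ ⋯ ⊕ E_i`. -/
noncomputable def Whigh {s : ℕ} (E : Fin (s+1) → Submodule ℝ V) (i : ℕ) : Submodule ℝ V :=
  ⨆ j : Fin (s+1), ⨆ _ : (j : ℕ) ≤ i, E j

/-- `‖x ∧ y‖ = (|x|²|y|² − ⟨x,y⟫²)^{1/2}`, the area of the parallelogram spanned by `x, y`. -/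
noncomputable def wedgeNorm (x y : V) : ℝ :=
  Real.sqrt (‖x‖ ^ 2 * ‖y‖ ^ 2 - ⟪x, y⟫ ^ 2)

/-! Normalise `a = x / f₀ x`, `b = y / f₀ y` and let `P` be the orthogonal projection onto
`(Vⁱ)^⊥`. The components of `a - b` of index `< i` vanish and those of index `> i` lie in `Vⁱ`,
so `‖P a - P b‖ ≤ ‖gⁱ(x̄) - gⁱ(ȳ)‖ ≤ r`. Since `L₀ b = u₀` and `Vⁱ ⊆ V⁰`, `P b` is `u₀` minus a
vector of `V⁰`, so `‖P b‖ ≥ κ`. Hence `d(P x̄, P ȳ) ≤ ‖P a - P b‖ / ‖P b‖ ≤ r / κ`, which is below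
the stated bound because `κ ≤ 1` and `‖g(x̄)‖_∞ ≥ |g⁰(x̄)| = 1`. Finally `κ > 0`: by compactness
of unit spheres, disjoint subspaces make an angle bounded away from `0`. -/

lemma projDist_comm (x y : V) : projDist x y = projDist y x := by
  rw [projDist, projDist, real_inner_comm, mul_comm]

lemma projDist_le_one (x y : V) : projDist x y ≤ 1 :=
  Real.sqrt_le_one.mpr (sub_le_self _ (by positivity))

lemma projDist_smul_left {c : ℝ} (hc : c ≠ 0) (x y : V) :
    projDist (c • x) y = projDist x y := by
  rw [projDist, projDist, real_inner_smul_left, norm_smul, Real.norm_eq_abs, mul_pow, mul_pow,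
    sq_abs, mul_assoc, mul_div_mul_left _ _ (pow_ne_zero 2 hc)]

lemma projDist_smul_right {c : ℝ} (hc : c ≠ 0) (x y : V) :
    projDist x (c • y) = projDist x y := by
  rw [projDist_comm, projDist_smul_left hc, projDist_comm]

lemma projDist_of_norm_eq_one {x y : V} (hx : ‖x‖ = 1) (hy : ‖y‖ = 1) :
    projDist x y = Real.sqrt (1 - ⟪x, y⟫ ^ 2) := by
  rw [projDist, hx, hy]
  norm_num

/-- `‖u‖ · d(ū, z̄)` is the distance from `u` to the line `ℝ z`; the junk value `d(ū, 0̄) = 1`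
keeps this true for `z = 0`. -/
lemma norm_mul_projDist_le_norm_sub (u z : V) : ‖u‖ * projDist u z ≤ ‖u - z‖ := by
  rcases eq_or_ne z 0 with rfl | hz
  · simp [projDist]
  have hz' : 0 < ‖z‖ := norm_pos_iff.mpr hz
  have key : ‖u‖ ^ 2 * (1 - ⟪u, z⟫ ^ 2 / (‖u‖ ^ 2 * ‖z‖ ^ 2)) ≤ ‖u - z‖ ^ 2 := by
    rcases eq_or_ne u 0 with rfl | hu
    · simp
    have hu' : 0 < ‖u‖ := norm_pos_iff.mpr hu
    rw [mul_sub, mul_one, ← mul_div_assoc, mul_div_mul_left _ _ (by positivity), norm_sub_sq_real,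
      sub_le_iff_le_add, ← sub_le_iff_le_add', le_div_iff₀ (by positivity)]
    nlinarith [sq_nonneg (‖z‖ ^ 2 - ⟪u, z⟫)]
  calc ‖u‖ * projDist u z = √(‖u‖ ^ 2 * (1 - ⟪u, z⟫ ^ 2 / (‖u‖ ^ 2 * ‖z‖ ^ 2))) := by
        rw [projDist, Real.sqrt_mul (sq_nonneg _), Real.sqrt_sq (norm_nonneg _)]
    _ ≤ √(‖u - z‖ ^ 2) := Real.sqrt_le_sqrt key
    _ = ‖u - z‖ := Real.sqrt_sq (norm_nonneg _)

lemma projDist_le_norm_sub_div {a b : V} (hb : b ≠ 0) : projDist a b ≤ ‖a - b‖ / ‖b‖ := by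
  rw [le_div_iff₀ (norm_pos_iff.mpr hb), projDist_comm, mul_comm, norm_sub_rev]
  exact norm_mul_projDist_le_norm_sub b a

lemma abs_real_inner_lt_norm_mul_norm_of_disjoint {A B : Submodule ℝ V} (hAB : Disjoint A B)
    {a b : V} (ha : a ∈ A) (ha0 : a ≠ 0) (hb : b ∈ B) (hb0 : b ≠ 0) :
    |⟪a, b⟫| < ‖a‖ * ‖b‖ := by
  refine (abs_real_inner_le_norm a b).lt_of_ne fun h => hb0 ?_
  obtain ⟨c, -, rfl⟩ := (norm_inner_eq_norm_iff (𝕜 := ℝ) ha0 hb0).mp h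
  exact (Submodule.disjoint_def.mp hAB) _ (A.smul_mem c ha) hb

/-- By compactness of the unit spheres of `A` and `B`, the strict Cauchy–Schwarz inequality
between them holds uniformly. -/
lemma exists_pos_le_projDist_of_disjoint [FiniteDimensional ℝ V] {A B : Submodule ℝ V}
    (hAB : Disjoint A B) :
    ∃ ε > 0, ∀ a ∈ A, a ≠ 0 → ∀ b ∈ B, b ≠ 0 → ε ≤ projDist a b := by
  let S : Submodule ℝ V → Set V := fun C => (C : Set V) ∩ Metric.sphere 0 1
  have hS : ∀ C : Submodule ℝ V, IsCompact (S C) := fun C =>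
    (isCompact_sphere 0 1).inter_left (Submodule.closed_of_finiteDimensional C)
  have hnormalize : ∀ (C : Submodule ℝ V) {v : V}, v ∈ C → v ≠ 0 → ‖v‖⁻¹ • v ∈ S C :=
    fun C v hv hv0 => ⟨C.smul_mem _ hv, mem_sphere_zero_iff_norm.mpr (norm_smul_inv_norm hv0)⟩
  obtain ⟨M, hM0, hM1, hM⟩ : ∃ M, 0 ≤ M ∧ M < 1 ∧ ∀ p ∈ S A ×ˢ S B, |⟪p.1, p.2⟫| ≤ M := by
    rcases (S A ×ˢ S B).eq_empty_or_nonempty with hK | hK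
    · exact ⟨0, le_rfl, one_pos, by simp [hK]⟩
    obtain ⟨p, ⟨⟨hpA, hp1⟩, ⟨hpB, hp2⟩⟩, hmax⟩ := ((hS A).prod (hS B)).exists_isMaxOn hK
      (f := fun p : V × V => |⟪p.1, p.2⟫|) (continuous_fst.inner continuous_snd).abs.continuousOn
    rw [mem_sphere_zero_iff_norm] at hp1 hp2
    have hlt := abs_real_inner_lt_norm_mul_norm_of_disjoint hAB hpA
      (norm_ne_zero_iff.mp (by rw [hp1]; exact one_ne_zero)) hpB
      (norm_ne_zero_iff.mp (by rw [hp2]; exact one_ne_zero))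
    rw [hp1, hp2, mul_one] at hlt
    exact ⟨_, abs_nonneg _, hlt, fun q hq => isMaxOn_iff.mp hmax q hq⟩
  refine ⟨√(1 - M ^ 2), Real.sqrt_pos.mpr (by nlinarith), ?_⟩
  intro a ha ha0 b hb hb0
  have hna : ‖‖a‖⁻¹ • a‖ = 1 := norm_smul_inv_norm ha0
  have hnb : ‖‖b‖⁻¹ • b‖ = 1 := norm_smul_inv_norm hb0
  have hle := hM (_, _) (Set.mk_mem_prod (hnormalize A ha ha0) (hnormalize B hb hb0))
  rw [← projDist_smul_left (inv_ne_zero (norm_ne_zero_iff.mpr ha0)),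
    ← projDist_smul_right (inv_ne_zero (norm_ne_zero_iff.mpr hb0)), projDist_of_norm_eq_one hna hnb]
  refine Real.sqrt_le_sqrt (sub_le_sub_left ?_ _)
  rw [← sq_abs]
  exact pow_le_pow_left₀ (abs_nonneg _) hle 2

lemma mem_biSup_of_mem {ι : Type*} {E : ι → Submodule ℝ V} {p : ι → Prop} {k : ι} (hk : p k)
    {x : V} (hx : x ∈ E k) : x ∈ ⨆ (i) (_ : p i), E i :=
  le_iSup₂ (f := fun i (_ : p i) => E i) k hk hx

section Kappa

variable {ι : Type*} {E : ι → Submodule ℝ V}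

lemma kappa_le_one (E : ι → Submodule ℝ V) : kappa E ≤ 1 := by
  rw [kappa]
  refine (Real.sInf_le_sSup _ ⟨0, ?_⟩ ⟨1, ?_⟩).trans (Real.sSup_le ?_ zero_le_one) <;>
    rintro _ ⟨-, -, x, y, -, -, -, -, -, -, -, rfl⟩
  exacts [Real.sqrt_nonneg _, projDist_le_one x y, projDist_le_one x y]

/-- Vectors equal to `0` are allowed: `projDist` takes its junk value `1` on them. -/
lemma kappa_le_projDist {I J : Finset ι} (hI : I.Nonempty) (hJ : J.Nonempty)
    (hIJ : Disjoint I J) {a b : V} (ha : a ∈ ⨆ i ∈ I, E i) (hb : b ∈ ⨆ j ∈ J, E j) :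
    kappa E ≤ projDist a b := by
  rcases eq_or_ne a 0 with rfl | ha0
  · simpa [projDist] using kappa_le_one E
  rcases eq_or_ne b 0 with rfl | hb0
  · simpa [projDist] using kappa_le_one E
  refine csInf_le ⟨0, ?_⟩ ⟨I, J, a, b, hI, hJ, hIJ, ha, ha0, hb, hb0, rfl⟩
  rintro _ ⟨-, -, x, y, -, -, -, -, -, -, -, rfl⟩
  exact Real.sqrt_nonneg _

lemma kappa_mul_norm_le_norm_sub {I J : Finset ι} (hI : I.Nonempty) (hJ : J.Nonempty)
    (hIJ : Disjoint I J) {a b : V} (ha : a ∈ ⨆ i ∈ I, E i) (hb : b ∈ ⨆ j ∈ J, E j) :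
    kappa E * ‖a‖ ≤ ‖a - b‖ :=
  calc kappa E * ‖a‖ ≤ projDist a b * ‖a‖ :=
        mul_le_mul_of_nonneg_right (kappa_le_projDist hI hJ hIJ ha hb) (norm_nonneg a)
    _ ≤ ‖a - b‖ := by rw [mul_comm]; exact norm_mul_projDist_le_norm_sub a b

/-- `κ` is at least the minimum, over the finitely many `I`, of the uniform angle between the
disjoint subspaces `⨆ I` and `⨆ Iᶜ`. -/
lemma kappa_pos [FiniteDimensional ℝ V] [Finite ι] (hE : iSupIndep E) {i j : ι} (hij : i ≠ j)
    (hi : E i ≠ ⊥) (hj : E j ≠ ⊥) : 0 < kappa E := by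
  have hcompl (I : Finset ι) : ∃ ε > 0, ∀ a ∈ ⨆ k ∈ I, E k, a ≠ 0 →
      ∀ b ∈ ⨆ k ∈ (I : Set ι)ᶜ, E k, b ≠ 0 → ε ≤ projDist a b :=
    exists_pos_le_projDist_of_disjoint (hE.disjoint_biSup_biSup disjoint_compl_right)
  choose ε hε0 hε using hcompl
  obtain ⟨I₀, hI₀⟩ := Finite.exists_min ε
  obtain ⟨x, hx, hx0⟩ := Submodule.exists_mem_ne_zero_of_ne_bot hi
  obtain ⟨y, hy, hy0⟩ := Submodule.exists_mem_ne_zero_of_ne_bot hj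
  refine (hε0 I₀).trans_le (le_csInf ⟨_, {i}, {j}, x, y, Finset.singleton_nonempty i,
    Finset.singleton_nonempty j, Finset.disjoint_singleton.mpr hij,
    mem_biSup_of_mem (Finset.mem_singleton_self i) hx, hx0,
    mem_biSup_of_mem (Finset.mem_singleton_self j) hy, hy0, rfl⟩ ?_)
  rintro _ ⟨I, J, a, b, -, -, hIJ, ha, ha0, hb, hb0, rfl⟩
  refine (hI₀ I).trans (hε I a ha ha0 b ?_ hb0)
  exact (biSup_mono fun k hk => Finset.disjoint_right.mp hIJ hk :
    (⨆ k ∈ J, E k) ≤ ⨆ k ∈ (I : Set ι)ᶜ, E k) hb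

end Kappa

section Projection

variable {U : Submodule ℝ V} [U.HasOrthogonalProjection]

lemma norm_starProjection_orthogonal_sub_le {a b : V} (w : V) (h : a - b - w ∈ U) :
    ‖Uᗮ.starProjection a - Uᗮ.starProjection b‖ ≤ ‖w‖ := by
  have hker : Uᗮ.starProjection (a - b - w) = 0 :=
    (Uᗮ.starProjection_apply_eq_zero_iff).mpr (U.le_orthogonal_orthogonal h)
  rw [map_sub, map_sub, sub_eq_zero] at hker
  rw [hker]
  exact Uᗮ.norm_starProjection_apply_le w

lemma kappa_mul_norm_le_norm_starProjection_orthogonal {ι : Type*} {E : ι → Submodule ℝ V}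
    {I J : Finset ι} (hI : I.Nonempty) (hJ : J.Nonempty) (hIJ : Disjoint I J)
    (hU : U ≤ ⨆ j ∈ J, E j) {u b : V} (hu : u ∈ ⨆ i ∈ I, E i) (hb : b - u ∈ ⨆ j ∈ J, E j) :
    kappa E * ‖u‖ ≤ ‖Uᗮ.starProjection b‖ := by
  have hdecomp : Uᗮ.starProjection b = u - (u - b + U.starProjection b) := by
    rw [Submodule.starProjection_orthogonal_val]; abel
  rw [hdecomp]
  refine kappa_mul_norm_le_norm_sub hI hJ hIJ hu (Submodule.add_mem _ ?_ (hU (by simp)))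
  rw [← neg_sub]
  exact Submodule.neg_mem _ hb

end Projection

section Decomposition

variable {ι : Type*} [Fintype ι] [DecidableEq ι] {E : ι → Submodule ℝ V} {L : ι → V →ₗ[ℝ] V}
  (hL1 : ∀ x, ∑ k, L k x = x)
  {U : Submodule ℝ V} [U.HasOrthogonalProjection]

include hL1

lemma norm_starProjection_orthogonal_sub_le_component {a b : V} (j : ι)
    (h : ∀ k ≠ j, L k a - L k b ∈ U) :
    ‖Uᗮ.starProjection a - Uᗮ.starProjection b‖ ≤ ‖L j a - L j b‖ := by
  refine norm_starProjection_orthogonal_sub_le _ ?_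
  have hsum : a - b = ∑ k, (L k a - L k b) := by rw [Finset.sum_sub_distrib, hL1, hL1]
  rw [hsum, ← Finset.add_sum_erase _ _ (Finset.mem_univ j), add_sub_cancel_left]
  exact U.sum_mem fun k hk => h k (Finset.ne_of_mem_erase hk)

lemma sub_apply_mem_biSup_erase (hL2 : ∀ k x, L k x ∈ E k) (j : ι) (b : V) :
    b - L j b ∈ ⨆ k ∈ Finset.univ.erase j, E k := by
  have hsum := hL1 b
  rw [← Finset.add_sum_erase _ _ (Finset.mem_univ j)] at hsum
  rw [← eq_sub_of_add_eq' hsum]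
  exact Submodule.sum_mem _ fun k hk => mem_biSup_of_mem hk (hL2 k b)

lemma kappa_mul_norm_apply_le_norm_starProjection_orthogonal (hL2 : ∀ k x, L k x ∈ E k)
    {j j' : ι} (hj' : j' ≠ j) (hU : U ≤ ⨆ k ∈ Finset.univ.erase j, E k) (b : V) :
    kappa E * ‖L j b‖ ≤ ‖Uᗮ.starProjection b‖ :=
  kappa_mul_norm_le_norm_starProjection_orthogonal (Finset.singleton_nonempty j)
    ⟨j', Finset.mem_erase.mpr ⟨hj', Finset.mem_univ _⟩⟩
    (Finset.disjoint_singleton_left.mpr (Finset.notMem_erase j _)) hU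
    (mem_biSup_of_mem (Finset.mem_singleton_self j) (hL2 j b))
    (sub_apply_mem_biSup_erase hL1 hL2 j b)

end Decomposition

lemma le_Vlow {s : ℕ} (E : Fin (s+1) → Submodule ℝ V) {i : ℕ} {k : Fin (s+1)} (hk : i < k) :
    E k ≤ Vlow E i :=
  le_iSup₂ (f := fun (j : Fin (s+1)) (_ : i < (j : ℕ)) => E j) k hk

lemma Vlow_le_biSup_erase_zero {s : ℕ} (E : Fin (s+1) → Submodule ℝ V) (i : ℕ) :
    Vlow E i ≤ ⨆ k ∈ Finset.univ.erase 0, E k :=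
  iSup₂_le fun k hk => le_iSup₂ (f := fun k (_ : k ∈ Finset.univ.erase 0) => E k) k
    (Finset.mem_erase.mpr ⟨fun h => by simp [h] at hk, Finset.mem_univ _⟩)

lemma div_le_mul_inv_pow_mul {κ C r : ℝ} {n : ℕ} (hκ0 : 0 < κ) (hκ1 : κ ≤ 1) (hn : n ≠ 0)
    (hC : 1 ≤ C) (hr : 0 ≤ r) : r / κ ≤ C * (κ ^ n)⁻¹ * r := by
  rw [div_eq_inv_mul, mul_assoc]
  have hpow : κ⁻¹ ≤ (κ ^ n)⁻¹ :=
    inv_anti₀ (pow_pos hκ0 n) (pow_le_of_le_one hκ0.le hκ1 hn)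
  calc κ⁻¹ * r ≤ (κ ^ n)⁻¹ * r := mul_le_mul_of_nonneg_right hpow hr
    _ ≤ C * ((κ ^ n)⁻¹ * r) := le_mul_of_one_le_left (by positivity) hC

/-- Lemma 5.2 of the paper. If `x̄, ȳ ∈ P(V) ∖ P(V⁰)` agree in the
coordinates `g⁰,…,g^{i−1}` and `|gⁱ(x̄) − gⁱ(ȳ)| ≤ r`, then
`d(P_{(Vⁱ)^⊥} x̄, P_{(Vⁱ)^⊥} ȳ) ≤ s³ · 2^{3+s} · ‖g(x̄)‖_∞ · κ^{-2s-2} · r`. -/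
theorem stmt9 [FiniteDimensional ℝ V]
    (s : ℕ) (hs : 1 ≤ s) (E : Fin (s+1) → Submodule ℝ V)
    (hE : DirectSum.IsInternal E) (hEne : ∀ k, E k ≠ ⊥)
    (L : Fin (s+1) → V →ₗ[ℝ] V)
    (hL1 : ∀ x : V, ∑ k, L k x = x) (hL2 : ∀ k x, L k x ∈ E k)
    (u₀ : V) (hu₀n : ‖u₀‖ = 1)
    (f₀ : V →ₗ[ℝ] ℝ) (hf₀ : ∀ x, L 0 x = f₀ x • u₀)
    (i : ℕ) (hi2 : i ≤ s)
    (x y : V) (hfx : f₀ x ≠ 0) (hfy : f₀ y ≠ 0)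
    (r : ℝ) (hr : 0 < r)
    (hgk : ∀ k : Fin (s+1), (k : ℕ) < i → (f₀ x)⁻¹ • L k x = (f₀ y)⁻¹ • L k y)
    (hgi : ‖(f₀ x)⁻¹ • L ⟨i, by omega⟩ x - (f₀ y)⁻¹ • L ⟨i, by omega⟩ y‖ ≤ r) :
    projDist (Submodule.orthogonalProjection (Vlow E i)ᗮ x : V)
        (Submodule.orthogonalProjection (Vlow E i)ᗮ y : V) ≤
      (s : ℝ) ^ 3 * 2 ^ (3 + s) *
        (Finset.univ.sup' Finset.univ_nonempty fun k => ‖(f₀ x)⁻¹ • L k x‖) *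
        (kappa E ^ (2 * s + 2))⁻¹ * r := by
  set P := (Vlow E i)ᗮ.starProjection
  set a := (f₀ x)⁻¹ • x
  set b := (f₀ y)⁻¹ • y
  have h10 : (⟨1, by omega⟩ : Fin (s+1)) ≠ 0 := by simp [Fin.ext_iff]
  have hκ : 0 < kappa E := kappa_pos hE.submodule_iSupIndep h10 (hEne _) (hEne _)
  have hPb : kappa E ≤ ‖P b‖ := by
    have := kappa_mul_norm_apply_le_norm_starProjection_orthogonal hL1 hL2 h10
      (Vlow_le_biSup_erase_zero E i) b
    rwa [hf₀, map_smul, smul_eq_mul, inv_mul_cancel₀ hfy, one_smul, hu₀n, mul_one] at this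
  have hPab : ‖P a - P b‖ ≤ r := by
    refine (norm_starProjection_orthogonal_sub_le_component hL1 ⟨i, by omega⟩ fun k hk => ?_).trans
      (by simpa only [a, b, map_smul] using hgi)
    rcases lt_or_gt_of_ne (fun h : (k : ℕ) = i => hk (Fin.ext h)) with hki | hki
    · simp only [a, b, map_smul, hgk k hki, sub_self, zero_mem]
    · exact sub_mem (le_Vlow E hki (hL2 k a)) (le_Vlow E hki (hL2 k b))
  have hM : 1 ≤ Finset.univ.sup' Finset.univ_nonempty fun k => ‖(f₀ x)⁻¹ • L k x‖ := by
    refine le_trans ?_ (Finset.le_sup' _ (Finset.mem_univ 0))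
    rw [hf₀, smul_smul, inv_mul_cancel₀ hfx, one_smul, hu₀n]
  calc _ = projDist (P a) (P b) := by
        simp only [Submodule.coe_orthogonalProjectionOnto_apply, P, a, b, map_smul,
          projDist_smul_left (inv_ne_zero hfx), projDist_smul_right (inv_ne_zero hfy)]
    _ ≤ ‖P a - P b‖ / ‖P b‖ := projDist_le_norm_sub_div (norm_pos_iff.mp (hκ.trans_le hPb))
    _ ≤ r / kappa E := div_le_div₀ hr.le hPab hκ hPb
    _ ≤ _ := div_le_mul_inv_pow_mul hκ (kappa_le_one E) (by omega)
        (one_le_mul_of_one_le_of_one_le (one_le_mul_of_one_le_of_one_le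
          (one_le_pow₀ (by exact_mod_cast hs)) (one_le_pow₀ one_le_two)) hM) hr.le
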